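/- arXiv:2210.15145 — 2 statements merged into one kernel-verified Lean document; each statement's English description precedes it below -/
import Mathlib

section
/- Consider the substitution p ↦ exp(λ g^×) p applied to the differenced pseudo-range ρ(p) = ‖Rp − s_k‖ − ‖Rp − s_l‖ with n_j := (Rp − s_j)/‖Rp − s_j‖. Then d/dλ|_{λ=0} ρ(exp(λg^×)p) = (n_k − n_l)ᵀ R (g × p). Hence the rotation about axis g is infinitesimally unobservable at p if and only if g × p lies in the null space of the row (n_k − n_l)ᵀR. -/
open Matrix

def skew (v : Fin 3 → ℝ) : Matrix (Fin 3) (Fin 3) ℝ :=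
  !![0, -v 2, v 1; v 2, 0, -v 0; -v 1, v 0, 0]

noncomputable def norm3 (x : Fin 3 → ℝ) : ℝ := Real.sqrt (∑ i, x i ^ 2)

theorem skew_mulVec (g p : Fin 3 → ℝ) : skew g *ᵥ p = crossProduct g p := by
  ext i
  fin_cases i <;> simp [skew, crossProduct, mulVec, dotProduct, Fin.sum_univ_three] <;> ring

theorem norm3_eq_sqrt_dotProduct (x : Fin 3 → ℝ) : norm3 x = √(x ⬝ᵥ x) := by
  simp only [norm3, dotProduct, sq]

theorem HasDerivAt.dotProduct {ι : Type*} [Fintype ι] {f g : ℝ → ι → ℝ} {f' g' : ι → ℝ} {t : ℝ}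
    (hf : HasDerivAt f f' t) (hg : HasDerivAt g g' t) :
    HasDerivAt (fun s => f s ⬝ᵥ g s) (f' ⬝ᵥ g t + f t ⬝ᵥ g') t := by
  simp only [_root_.dotProduct, ← Finset.sum_add_distrib]
  exact HasDerivAt.fun_sum fun i _ => (hasDerivAt_pi.1 hf i).mul (hasDerivAt_pi.1 hg i)

theorem HasDerivAt.norm3 {f : ℝ → Fin 3 → ℝ} {f' : Fin 3 → ℝ} {t : ℝ}
    (hf : HasDerivAt f f' t) (hft : f t ≠ 0) :
    HasDerivAt (fun s => norm3 (f s)) (((norm3 (f t))⁻¹ • f t) ⬝ᵥ f') t := by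
  simp only [norm3_eq_sqrt_dotProduct]
  have hpos : 0 < f t ⬝ᵥ f t :=
    lt_of_le_of_ne (Finset.sum_nonneg fun i _ => mul_self_nonneg (f t i))
      (Ne.symm (dotProduct_self_eq_zero.not.mpr hft))
  convert (hf.dotProduct hf).sqrt hpos.ne' using 1
  rw [dotProduct_comm f', smul_dotProduct, smul_eq_mul]
  field_simp [(Real.sqrt_pos.mpr hpos).ne']
  ring

section

-- `NormedSpace.exp` depends only on the topology, so any Banach algebra norm on matrices will do.
attribute [local instance] Matrix.linftyOpNormedRing Matrix.linftyOpNormedAlgebra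

theorem hasDerivAt_exp_smul_mulVec {n : Type*} [Fintype n] [DecidableEq n]
    (A : Matrix n n ℝ) (p : n → ℝ) :
    HasDerivAt (fun t : ℝ => NormedSpace.exp (t • A) *ᵥ p) (A *ᵥ p) 0 := by
  have hexp := hasDerivAt_exp_smul_const (𝕂 := ℝ) A 0
  rw [zero_smul, NormedSpace.exp_zero, one_mul] at hexp
  exact ((mulVecBilin ℝ ℝ).flip p).toContinuousLinearMap.hasFDerivAt.comp_hasDerivAt 0 hexp

end

theorem hasDerivAt_norm3_mulVec_exp_smul_skew_sub (g p s : Fin 3 → ℝ)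
    (R : Matrix (Fin 3) (Fin 3) ℝ) (hs : R *ᵥ p ≠ s) :
    HasDerivAt (fun t : ℝ => norm3 (R *ᵥ (NormedSpace.exp (t • skew g) *ᵥ p) - s))
      (((norm3 (R *ᵥ p - s))⁻¹ • (R *ᵥ p - s)) ⬝ᵥ (R *ᵥ crossProduct g p)) 0 := by
  have hrot := (R.mulVecLin.toContinuousLinearMap.hasFDerivAt.comp_hasDerivAt 0
    (hasDerivAt_exp_smul_mulVec (skew g) p)).sub_const s
  rw [skew_mulVec] at hrot
  simpa using hrot.norm3 (by simpa [sub_eq_zero] using hs)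

theorem stmt_11_general (g : Fin 3 → ℝ)
    (R : Matrix (Fin 3) (Fin 3) ℝ)
    (sk sl p : Fin 3 → ℝ) (hk : R *ᵥ p ≠ sk) (hl : R *ᵥ p ≠ sl) :
    let nk : Fin 3 → ℝ := (norm3 (R *ᵥ p - sk))⁻¹ • (R *ᵥ p - sk)
    let nl : Fin 3 → ℝ := (norm3 (R *ᵥ p - sl))⁻¹ • (R *ᵥ p - sl)
    let ρ : (Fin 3 → ℝ) → ℝ := fun q => norm3 (R *ᵥ q - sk) - norm3 (R *ᵥ q - sl)
    HasDerivAt (fun lam : ℝ => ρ (NormedSpace.exp (lam • skew g) *ᵥ p))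
      ((nk - nl) ⬝ᵥ (R *ᵥ (crossProduct g p))) 0 ∧
    (HasDerivAt (fun lam : ℝ => ρ (NormedSpace.exp (lam • skew g) *ᵥ p)) 0 0 ↔
      (nk - nl) ⬝ᵥ (R *ᵥ (crossProduct g p)) = 0) := by
  intro nk nl ρ
  have hρ : HasDerivAt (fun lam : ℝ => ρ (NormedSpace.exp (lam • skew g) *ᵥ p))
      ((nk - nl) ⬝ᵥ (R *ᵥ (crossProduct g p))) 0 := by
    rw [sub_dotProduct]
    exact (hasDerivAt_norm3_mulVec_exp_smul_skew_sub g p sk R hk).sub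
      (hasDerivAt_norm3_mulVec_exp_smul_skew_sub g p sl R hl)
  exact ⟨hρ, fun h0 => hρ.unique h0, fun h => h ▸ hρ⟩

/-- Infinitesimal effect of the rotation p ↦ exp(λg^×)p on the differenced pseudo-range,
and the unobservability criterion for the rotation about axis g. -/
theorem stmt_11 (g : Fin 3 → ℝ)
    (R : Matrix (Fin 3) (Fin 3) ℝ) (hR : Rᵀ * R = 1) (hdet : R.det = 1)
    (sk sl p : Fin 3 → ℝ) (hk : R *ᵥ p ≠ sk) (hl : R *ᵥ p ≠ sl) :
    let nk : Fin 3 → ℝ := (norm3 (R *ᵥ p - sk))⁻¹ • (R *ᵥ p - sk)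
    let nl : Fin 3 → ℝ := (norm3 (R *ᵥ p - sl))⁻¹ • (R *ᵥ p - sl)
    let ρ : (Fin 3 → ℝ) → ℝ := fun q => norm3 (R *ᵥ q - sk) - norm3 (R *ᵥ q - sl)
    HasDerivAt (fun lam : ℝ => ρ (NormedSpace.exp (lam • skew g) *ᵥ p))
      ((nk - nl) ⬝ᵥ (R *ᵥ (crossProduct g p))) 0 ∧
    (HasDerivAt (fun lam : ℝ => ρ (NormedSpace.exp (lam • skew g) *ᵥ p)) 0 0 ↔
      (nk - nl) ⬝ᵥ (R *ᵥ (crossProduct g p)) = 0) :=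
  stmt_11_general g R sk sl p hk hl
end

section
/- The discrete IMU propagation R_{k+1} = R_k Γ₀(ω Δt), v_{k+1} = v_k + g Δt + R_k Γ₁(ωΔt) a Δt, p_{k+1} = p_k + v_k Δt + ½ g Δt² + R_k Γ₂(ωΔt) a Δt² is the exact solution at time Δt of the ODE system Ṙ = R ω^×, v̇ = R a + g, ṗ = v with constant inputs ω, a ∈ ℝ³ and initial condition (R_k, v_k, p_k). -/
open Matrix

noncomputable def Gamma (m : ℕ) (θ : Fin 3 → ℝ) : Matrix (Fin 3) (Fin 3) ℝ :=
  ∑' n : ℕ, (((m + n).factorial : ℝ))⁻¹ • (skew θ) ^ n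

/-!
Write `φ_m` for the series `Γ_m`. Differentiating termwise, `t ↦ t^(m+1) φ_(m+1)(t A)` has
derivative `t^m φ_m(t A)`, and `φ_0 = exp`. Hence `R(t) exp(-t A)` is constant, so
`R(t) = R_k exp(t A)`; then the proposed `v` and `p` have the same derivatives and the same values
at `0` as the true ones, and agree with them by the mean value theorem.
-/

open Nat NormedSpace

theorem hasDerivAt_pow_div_factorial (k : ℕ) (t : ℝ) :
    HasDerivAt (fun s : ℝ => s ^ (k + 1) / (k + 1)!) (t ^ k / k !) t := by
  refine ((hasDerivAt_pow (k + 1) t).div_const ((k + 1)! : ℝ)).congr_deriv ?_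
  rw [Nat.factorial_succ]
  push_cast
  field_simp

section Phi

variable {𝔸 : Type*} [NormedRing 𝔸] [NormedAlgebra ℝ 𝔸]

/-- The φ-functions of exponential integrators: `Gamma m θ` is `phi m (skew θ)`. -/
noncomputable def phi (m : ℕ) (x : 𝔸) : 𝔸 := ∑' n : ℕ, ((m + n)! : ℝ)⁻¹ • x ^ n

theorem phi_zero (x : 𝔸) : phi 0 x = exp x := by
  simp [phi, exp_eq_tsum ℝ]

theorem pow_smul_phi_smul (m : ℕ) (x : 𝔸) (t : ℝ) :
    t ^ m • phi m (t • x) = ∑' n : ℕ, (t ^ (m + n) / (m + n)!) • x ^ n := by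
  rw [phi, ← tsum_const_smul'']
  refine tsum_congr fun n => ?_
  rw [smul_pow, smul_smul, smul_smul, pow_add]
  ring_nf

variable [NormOneClass 𝔸]

theorem norm_pow_div_factorial_smul_pow_le (m n : ℕ) (x : 𝔸) {r y : ℝ} (hy : |y| ≤ r) :
    ‖(y ^ (m + n) / (m + n)!) • x ^ n‖ ≤ r ^ m * ((r * ‖x‖) ^ n / n !) := by
  have hr : 0 ≤ r := (abs_nonneg y).trans hy
  rw [norm_smul, norm_div, norm_pow, Real.norm_eq_abs, Real.norm_natCast, mul_pow, pow_add]
  calc |y| ^ m * |y| ^ n / (m + n)! * ‖x ^ n‖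
      ≤ r ^ m * r ^ n / n ! * ‖x‖ ^ n := by
        gcongr
        · exact Nat.le_add_left n m
        · exact norm_pow_le x n
    _ = r ^ m * (r ^ n * ‖x‖ ^ n / n !) := by ring

variable [CompleteSpace 𝔸]

theorem hasDerivAt_pow_smul_phi_smul (m : ℕ) (x : 𝔸) (t : ℝ) :
    HasDerivAt (fun s : ℝ => s ^ (m + 1) • phi (m + 1) (s • x)) (t ^ m • phi m (t • x)) t := by
  simp only [pow_smul_phi_smul]
  set r := |t| + 1
  have hball : t ∈ Set.Ioo (-r) r := abs_lt.mp (by simp [r])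
  refine hasDerivAt_tsum_of_isPreconnected
    (g := fun n (s : ℝ) => (s ^ (m + 1 + n) / (m + 1 + n)!) • x ^ n)
    (g' := fun n (s : ℝ) => (s ^ (m + n) / (m + n)!) • x ^ n)
    ((Real.summable_pow_div_factorial (r * ‖x‖)).mul_left (r ^ m))
    (isOpen_Ioo (a := -r) (b := r)) isPreconnected_Ioo
    (fun n y _ => ?_) (fun n y hy => ?_) hball ?_ hball
  · rw [show m + 1 + n = m + n + 1 by ring]
    exact (hasDerivAt_pow_div_factorial (m + n) y).smul_const (x ^ n)
  · exact norm_pow_div_factorial_smul_pow_le m n x (abs_lt.mpr hy).le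
  · exact .of_norm_bounded ((Real.summable_pow_div_factorial (r * ‖x‖)).mul_left (r ^ (m + 1)))
      fun n => norm_pow_div_factorial_smul_pow_le (m + 1) n x (by simp [r])

end Phi

section LinearODE

variable {𝔸 : Type*} [NormedRing 𝔸] [NormedAlgebra ℝ 𝔸] [CompleteSpace 𝔸]

theorem eq_mul_exp_smul_of_hasDerivAt {R : ℝ → 𝔸} {x : 𝔸} (hR : ∀ t, HasDerivAt R (R t * x) t)
    (t : ℝ) : R t = R 0 * exp (t • x) := by
  have hconst : ∀ s, HasDerivAt (fun s => R s * exp ((-s) • x)) 0 s := by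
    intro s
    have hexp := (hasDerivAt_exp_smul_const' x (-s)).scomp s (hasDerivAt_neg s)
    refine ((hR s).mul hexp).congr_deriv ?_
    rw [Function.comp_apply, neg_one_smul, mul_neg, ← mul_assoc, add_neg_eq_zero]
  have hinv : exp ((-t) • x) * exp (t • x) = 1 := by
    rw [← exp_add_of_commute_of_mem_ball (𝕂 := ℝ) ((Commute.refl x).smul_left _ |>.smul_right _)
      (by simp [expSeries_radius_eq_top]) (by simp [expSeries_radius_eq_top]), ← add_smul,
      neg_add_cancel, zero_smul, exp_zero]
  calc R t = R t * exp ((-t) • x) * exp (t • x) := by rw [mul_assoc, hinv, mul_one]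
    _ = R 0 * exp (t • x) := by
      rw [is_const_of_deriv_eq_zero (fun s => (hconst s).differentiableAt)
        (fun s => (hconst s).deriv) t 0]
      simp

end LinearODE

theorem eq_of_hasDerivAt_of_apply_zero {E : Type*} [NormedAddCommGroup E] [NormedSpace ℝ E]
    {f g f' : ℝ → E} (hf : ∀ t, HasDerivAt f (f' t) t) (hg : ∀ t, HasDerivAt g (f' t) t)
    (h0 : f 0 = g 0) : f = g := by
  funext t
  exact isOpen_univ.eqOn_of_deriv_eq isPreconnected_univ
    (fun s _ => (hf s).differentiableAt.differentiableWithinAt)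
    (fun s _ => (hg s).differentiableAt.differentiableWithinAt)
    (fun s _ => by simp only [(hf s).deriv, (hg s).deriv]) (Set.mem_univ 0) h0 (Set.mem_univ t)

theorem Matrix.hasDerivAt_iff {m n : Type*} [Fintype m] [Fintype n] {f : ℝ → Matrix m n ℝ}
    {f' : Matrix m n ℝ} {t : ℝ} :
    HasDerivAt f f' t ↔ ∀ i j, HasDerivAt (fun s => f s i j) (f' i j) t :=
  hasDerivAt_pi.trans (forall_congr' fun _ => hasDerivAt_pi)

theorem HasDerivAt.matrix_mulVec_const {m n : Type*} [Fintype m] [Fintype n]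
    {f : ℝ → Matrix m n ℝ} {f' : Matrix m n ℝ} {t : ℝ}
    (hf : HasDerivAt f f' t) (a : n → ℝ) : HasDerivAt (fun s => f s *ᵥ a) (f' *ᵥ a) t :=
  hasDerivAt_pi.mpr fun i => HasDerivAt.fun_sum fun j _ =>
    (Matrix.hasDerivAt_iff.mp hf i j).mul_const (a j)

theorem skew_smul (c : ℝ) (v : Fin 3 → ℝ) : skew (c • v) = c • skew v := by
  ext i j
  fin_cases i <;> fin_cases j <;> simp [skew]

section MatrixKinematics

variable {n : Type*} [Fintype n] [DecidableEq n]

-- Any complete algebra norm would do: `HasDerivAt` only sees the product topology.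
attribute [local instance] Matrix.linftyOpNormedRing Matrix.linftyOpNormedAlgebra

theorem hasDerivAt_mul_pow_smul_phi_smul_mulVec [Nonempty n] (m : ℕ) (R₀ A : Matrix n n ℝ)
    (a : n → ℝ) (t : ℝ) :
    HasDerivAt (fun s : ℝ => (R₀ * (s ^ (m + 1) • phi (m + 1) (s • A))) *ᵥ a)
      ((R₀ * (t ^ m • phi m (t • A))) *ᵥ a) t :=
  ((hasDerivAt_pow_smul_phi_smul m A t).const_mul R₀).matrix_mulVec_const a

variable {R : ℝ → Matrix n n ℝ} {v p : ℝ → n → ℝ} {A : Matrix n n ℝ} {a g : n → ℝ}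

theorem eq_mul_phi_zero_of_hasDerivAt (hR : ∀ t, HasDerivAt R (R t * A) t) (t : ℝ) :
    R t = R 0 * phi 0 (t • A) := by
  rw [phi_zero]
  exact eq_mul_exp_smul_of_hasDerivAt hR t

theorem eq_add_smul_phi_one_of_hasDerivAt [Nonempty n] (hR : ∀ t, HasDerivAt R (R t * A) t)
    (hv : ∀ t, HasDerivAt v (R t *ᵥ a + g) t) (t : ℝ) :
    v t = v 0 + t • g + t • ((R 0 * phi 1 (t • A)) *ᵥ a) := by
  have hsol : v = fun s => v 0 + s • g + (R 0 * (s ^ (0 + 1) • phi (0 + 1) (s • A))) *ᵥ a := by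
    refine eq_of_hasDerivAt_of_apply_zero hv (fun s => ?_) (by simp)
    refine (((hasDerivAt_id s).smul_const g).const_add (v 0) |>.add
      (hasDerivAt_mul_pow_smul_phi_smul_mulVec 0 (R 0) A a s)).congr_deriv ?_
    rw [eq_mul_phi_zero_of_hasDerivAt hR s]
    simp [add_comm]
  rw [congrFun hsol t]
  simp [Matrix.smul_mulVec]

theorem eq_add_smul_phi_two_of_hasDerivAt [Nonempty n] (hR : ∀ t, HasDerivAt R (R t * A) t)
    (hv : ∀ t, HasDerivAt v (R t *ᵥ a + g) t) (hp : ∀ t, HasDerivAt p (v t) t) (t : ℝ) :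
    p t = p 0 + t • v 0 + (t ^ 2 / 2) • g + t ^ 2 • ((R 0 * phi 2 (t • A)) *ᵥ a) := by
  have hsol : p = fun s => p 0 + s • v 0 + (s ^ 2 / 2) • g +
      (R 0 * (s ^ (1 + 1) • phi (1 + 1) (s • A))) *ᵥ a := by
    refine eq_of_hasDerivAt_of_apply_zero hp (fun s => ?_) (by simp)
    refine ((((hasDerivAt_id s).smul_const (v 0)).const_add (p 0)).add
      (((hasDerivAt_pow 2 s).div_const 2).smul_const g) |>.add
      (hasDerivAt_mul_pow_smul_phi_smul_mulVec 1 (R 0) A a s)).congr_deriv ?_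
    rw [eq_add_smul_phi_one_of_hasDerivAt hR hv s]
    simp [Matrix.smul_mulVec]
  rw [congrFun hsol t]
  simp [Matrix.smul_mulVec]

theorem Gamma_smul (m : ℕ) (c : ℝ) (θ : Fin 3 → ℝ) : Gamma m (c • θ) = phi m (c • skew θ) := by
  rw [← skew_smul]
  rfl

end MatrixKinematics

theorem stmt_14_general (ω a g : Fin 3 → ℝ) (Δt : ℝ)
    (Rk : Matrix (Fin 3) (Fin 3) ℝ)
    (vk pk : Fin 3 → ℝ)
    (R : ℝ → Matrix (Fin 3) (Fin 3) ℝ) (v p : ℝ → Fin 3 → ℝ)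
    (hR : ∀ t : ℝ, ∀ i j : Fin 3, HasDerivAt (fun s => R s i j) ((R t * skew ω) i j) t)
    (hv : ∀ t : ℝ, ∀ i : Fin 3, HasDerivAt (fun s => v s i) ((R t *ᵥ a + g) i) t)
    (hp : ∀ t : ℝ, ∀ i : Fin 3, HasDerivAt (fun s => p s i) (v t i) t)
    (hR0 : R 0 = Rk) (hv0 : v 0 = vk) (hp0 : p 0 = pk) :
    R Δt = Rk * Gamma 0 (Δt • ω) ∧
    v Δt = vk + Δt • g + Δt • ((Rk * Gamma 1 (Δt • ω)) *ᵥ a) ∧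
    p Δt = pk + Δt • vk + (Δt ^ 2 / 2) • g + Δt ^ 2 • ((Rk * Gamma 2 (Δt • ω)) *ᵥ a) := by
  have hR' : ∀ t, HasDerivAt R (R t * skew ω) t := fun t => Matrix.hasDerivAt_iff.mpr (hR t)
  have hv' : ∀ t, HasDerivAt v (R t *ᵥ a + g) t := fun t => hasDerivAt_pi.mpr (hv t)
  have hp' : ∀ t, HasDerivAt p (v t) t := fun t => hasDerivAt_pi.mpr (hp t)
  subst hR0 hv0 hp0
  simp only [Gamma_smul]
  exact ⟨eq_mul_phi_zero_of_hasDerivAt hR' Δt, eq_add_smul_phi_one_of_hasDerivAt hR' hv' Δt,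
    eq_add_smul_phi_two_of_hasDerivAt hR' hv' hp' Δt⟩

/-- The discrete IMU propagation formulas give the exact solution at time Δt of
Ṙ = Rω^×, v̇ = Ra + g, ṗ = v with constant inputs ω, a and initial condition (R_k,v_k,p_k). -/
theorem stmt_14 (ω a g : Fin 3 → ℝ) (Δt : ℝ) (hΔt : 0 < Δt)
    (Rk : Matrix (Fin 3) (Fin 3) ℝ) (hRk : Rkᵀ * Rk = 1) (hdet : Rk.det = 1)
    (vk pk : Fin 3 → ℝ)
    (R : ℝ → Matrix (Fin 3) (Fin 3) ℝ) (v p : ℝ → Fin 3 → ℝ)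
    (hR : ∀ t : ℝ, ∀ i j : Fin 3, HasDerivAt (fun s => R s i j) ((R t * skew ω) i j) t)
    (hv : ∀ t : ℝ, ∀ i : Fin 3, HasDerivAt (fun s => v s i) ((R t *ᵥ a + g) i) t)
    (hp : ∀ t : ℝ, ∀ i : Fin 3, HasDerivAt (fun s => p s i) (v t i) t)
    (hR0 : R 0 = Rk) (hv0 : v 0 = vk) (hp0 : p 0 = pk) :
    R Δt = Rk * Gamma 0 (Δt • ω) ∧
    v Δt = vk + Δt • g + Δt • ((Rk * Gamma 1 (Δt • ω)) *ᵥ a) ∧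
    p Δt = pk + Δt • vk + (Δt ^ 2 / 2) • g + Δt ^ 2 • ((Rk * Gamma 2 (Δt • ω)) *ᵥ a) :=
  stmt_14_general ω a g Δt Rk vk pk R v p hR hv hp hR0 hv0 hp0
end
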